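/- arXiv:1501.07138 — 4 statements merged into one kernel-verified Lean document; each statement's English description precedes it below -/
import Mathlib

section
/- Let 𝒞 be an additive category (a preadditive category with a zero object and binary biproducts). Let P, Q, R, S, T, U be objects of 𝒞 and let a : P → Q, g : P → R, h : Q → S, i : R → S, j : Q → T, k : R → T, m : S → U, ℓ : T → U be morphisms such that h is an isomorphism and such that the sequence P → Q ⊕ R → S ⊕ T → U — with first map having components (a, g), middle map given in matrix form by ((h, i), (j, k)), and last map having components (m, ℓ) — is a cochain complex (i.e. h∘a + i∘g = 0, j∘a + k∘g = 0, m∘h + ℓ∘j = 0, m∘i + ℓ∘k = 0). Then this cochain complex (concentrated in degrees 0, 1, 2, 3, with zero objects in all other degrees) is homotopy equivalent to the cochain complex P → R → T → U with differentials g, k − j∘h⁻¹∘i, and ℓ (also concentrated in degrees 0, 1, 2, 3). -/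
/-!
Since `h` is invertible, the matrix `((h, i), (j, k))` can be made diagonal by the
triangular changes of basis built from `h⁻¹ ≫ j` and `i ≫ h⁻¹`; this splits off the contractible
summand `Q ≅ S`. Concretely, the projection `(1, (0, 1), (-h⁻¹ ≫ j, 1), 1)` and the inclusion
`(1, (-i ≫ h⁻¹, 1), (0, 1), 1)` are chain maps whose composite on the small complex is the
identity, while on the big complex the other composite differs from the identity by `d s + s d`,
where `s : S ⊞ T ⟶ Q ⊞ R` is `-h⁻¹` on the `S`-summand and zero elsewhere.
-/

open CategoryTheory Limits ZeroObject

/-- A cochain complex concentrated in degrees `0, 1, 2, 3`, with given objects and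
differentials, and zero objects in all other degrees. -/
noncomputable def fourTermComplex {C : Type*} [Category C] [Preadditive C] [HasZeroObject C]
    (X0 X1 X2 X3 : C) (d0 : X0 ⟶ X1) (d1 : X1 ⟶ X2) (d2 : X2 ⟶ X3)
    (h01 : d0 ≫ d1 = 0) (h12 : d1 ≫ d2 = 0) : CochainComplex C ℤ :=
  CochainComplex.of
    (fun n => match n with
      | 0 => X0
      | 1 => X1
      | 2 => X2
      | 3 => X3
      | _ => (0 : C))
    (fun n => match n with
      | 0 => d0
      | 1 => d1
      | 2 => d2
      | _ => 0)
    (fun n => by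
      match n with
      | 0 => exact h01
      | 1 => exact h12
      | 2 => show d2 ≫ 0 = 0; simp
      | 3 => show (0 : _ ⟶ _) ≫ _ = 0; simp
      | (m : ℕ) + 4 => show (0 : _ ⟶ _) ≫ _ = 0; simp
      | Int.negSucc m => show (0 : _ ⟶ _) ≫ _ = 0; simp)

section Gauss

variable {C : Type*} [Category C] [Preadditive C] [HasZeroObject C] [HasBinaryBiproducts C]
  {P Q R S T U : C} (a : P ⟶ Q) (g : P ⟶ R) (h : Q ⟶ S) (i : R ⟶ S)
  (j : Q ⟶ T) (k : R ⟶ T) (m : S ⟶ U) (l : T ⟶ U)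

/-- The cochain complex `P ⟶ Q ⊞ R ⟶ S ⊞ T ⟶ U`, concentrated in degrees `0, 1, 2, 3`,
whose first differential has components `(a, g)`, whose middle differential is given in matrix
form by `((h, i), (j, k))`, and whose last differential has components `(m, ℓ)`. -/
noncomputable def bigComplex
    (rel1 : a ≫ h + g ≫ i = 0) (rel2 : a ≫ j + g ≫ k = 0)
    (rel3 : h ≫ m + j ≫ l = 0) (rel4 : i ≫ m + k ≫ l = 0) : CochainComplex C ℤ :=
  fourTermComplex P (Q ⊞ R) (S ⊞ T) U
    (biprod.lift a g)
    (biprod.desc (biprod.lift h j) (biprod.lift i k))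
    (biprod.desc m l)
    (by
      rw [biprod.lift_desc]
      ext
      · simpa using rel1
      · simpa using rel2)
    (by
      ext
      · simpa using rel3
      · simpa using rel4)

/-- The reduced cochain complex `P ⟶ R ⟶ T ⟶ U`, concentrated in degrees `0, 1, 2, 3`,
with differentials `g`, `k − j ∘ h⁻¹ ∘ i` and `ℓ`. -/
noncomputable def smallComplex [IsIso h]
    (rel1 : a ≫ h + g ≫ i = 0) (rel2 : a ≫ j + g ≫ k = 0)
    (rel3 : h ≫ m + j ≫ l = 0) (rel4 : i ≫ m + k ≫ l = 0) : CochainComplex C ℤ :=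
  fourTermComplex P R T U
    g (k - i ≫ inv h ≫ j) l
    (by
      have e1 : g ≫ i = -(a ≫ h) := eq_neg_of_add_eq_zero_right rel1
      have e2 : g ≫ k = -(a ≫ j) := eq_neg_of_add_eq_zero_right rel2
      calc g ≫ (k - i ≫ inv h ≫ j)
          = g ≫ k - (g ≫ i) ≫ inv h ≫ j := by
            simp only [Preadditive.comp_sub, Category.assoc]
        _ = -(a ≫ j) - (-(a ≫ h)) ≫ inv h ≫ j := by rw [e1, e2]
        _ = 0 := by simp)
    (by
      have e3 : j ≫ l = -(h ≫ m) := eq_neg_of_add_eq_zero_right rel3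
      have e4 : k ≫ l = -(i ≫ m) := eq_neg_of_add_eq_zero_right rel4
      calc (k - i ≫ inv h ≫ j) ≫ l
          = k ≫ l - i ≫ inv h ≫ (j ≫ l) := by
            simp only [Preadditive.sub_comp, Category.assoc]
        _ = -(i ≫ m) - i ≫ inv h ≫ (-(h ≫ m)) := by rw [e3, e4]
        _ = 0 := by simp)

namespace fourTermComplex

variable {V : Type*} [Category V] [Preadditive V] [HasZeroObject V]
  {X₀ X₁ X₂ X₃ : V} {d₀ : X₀ ⟶ X₁} {d₁ : X₁ ⟶ X₂} {d₂ : X₂ ⟶ X₃}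
  {hX₀₁ : d₀ ≫ d₁ = 0} {hX₁₂ : d₁ ≫ d₂ = 0}
  {Y₀ Y₁ Y₂ Y₃ : V} {e₀ : Y₀ ⟶ Y₁} {e₁ : Y₁ ⟶ Y₂} {e₂ : Y₂ ⟶ Y₃}
  {hY₀₁ : e₀ ≫ e₁ = 0} {hY₁₂ : e₁ ≫ e₂ = 0}

@[simp] lemma d_zero_one : (fourTermComplex X₀ X₁ X₂ X₃ d₀ d₁ d₂ hX₀₁ hX₁₂).d 0 1 = d₀ := by
  dsimp only [fourTermComplex]; exact CochainComplex.of_d (V := V) (α := ℤ) _ _ 0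

@[simp] lemma d_one_two : (fourTermComplex X₀ X₁ X₂ X₃ d₀ d₁ d₂ hX₀₁ hX₁₂).d 1 2 = d₁ := by
  dsimp only [fourTermComplex]; exact CochainComplex.of_d (V := V) (α := ℤ) _ _ 1

@[simp] lemma d_two_three : (fourTermComplex X₀ X₁ X₂ X₃ d₀ d₁ d₂ hX₀₁ hX₁₂).d 2 3 = d₂ := by
  dsimp only [fourTermComplex]; exact CochainComplex.of_d (V := V) (α := ℤ) _ _ 2

@[simp] lemma d_neg_one_zero : (fourTermComplex X₀ X₁ X₂ X₃ d₀ d₁ d₂ hX₀₁ hX₁₂).d (-1) 0 = 0 := by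
  dsimp only [fourTermComplex]; exact CochainComplex.of_d (V := V) (α := ℤ) _ _ (-1)

@[simp] lemma d_three_four : (fourTermComplex X₀ X₁ X₂ X₃ d₀ d₁ d₂ hX₀₁ hX₁₂).d 3 4 = 0 := by
  dsimp only [fourTermComplex]; exact CochainComplex.of_d (V := V) (α := ℤ) _ _ 3

noncomputable def homMk (f₀ : X₀ ⟶ Y₀) (f₁ : X₁ ⟶ Y₁) (f₂ : X₂ ⟶ Y₂) (f₃ : X₃ ⟶ Y₃)
    (comm₀ : f₀ ≫ e₀ = d₀ ≫ f₁) (comm₁ : f₁ ≫ e₁ = d₁ ≫ f₂) (comm₂ : f₂ ≫ e₂ = d₂ ≫ f₃) :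
    fourTermComplex X₀ X₁ X₂ X₃ d₀ d₁ d₂ hX₀₁ hX₁₂ ⟶
      fourTermComplex Y₀ Y₁ Y₂ Y₃ e₀ e₁ e₂ hY₀₁ hY₁₂ :=
  CochainComplex.ofHom
    (fun n => match n with
      | 0 => f₀
      | 1 => f₁
      | 2 => f₂
      | 3 => f₃
      | _ => 0)
    (fun n => match n with
      | 0 => by change f₀ ≫ _ = _ ≫ f₁; simpa using comm₀
      | 1 => by change f₁ ≫ _ = _ ≫ f₂; simpa using comm₁
      | 2 => by change f₂ ≫ _ = _ ≫ f₃; simpa using comm₂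
      | 3 => (isZero_zero V).eq_of_tgt _ _
      | (_ : ℕ) + 4 => (isZero_zero V).eq_of_src _ _
      | Int.negSucc _ => (isZero_zero V).eq_of_src _ _)

lemma hom_ext {φ ψ : fourTermComplex X₀ X₁ X₂ X₃ d₀ d₁ d₂ hX₀₁ hX₁₂ ⟶
      fourTermComplex Y₀ Y₁ Y₂ Y₃ e₀ e₁ e₂ hY₀₁ hY₁₂}
    (h₀ : φ.f 0 = ψ.f 0) (h₁ : φ.f 1 = ψ.f 1) (h₂ : φ.f 2 = ψ.f 2) (h₃ : φ.f 3 = ψ.f 3) :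
    φ = ψ := by
  ext n
  match n with
  | 0 => exact h₀
  | 1 => exact h₁
  | 2 => exact h₂
  | 3 => exact h₃
  | (_ : ℕ) + 4 => exact (isZero_zero V).eq_of_src _ _
  | Int.negSucc _ => exact (isZero_zero V).eq_of_src _ _

noncomputable def homotopyMk
    (φ ψ : fourTermComplex X₀ X₁ X₂ X₃ d₀ d₁ d₂ hX₀₁ hX₁₂ ⟶
      fourTermComplex Y₀ Y₁ Y₂ Y₃ e₀ e₁ e₂ hY₀₁ hY₁₂)
    (s₁ : X₁ ⟶ Y₀) (s₂ : X₂ ⟶ Y₁) (s₃ : X₃ ⟶ Y₂)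
    (h₀ : φ.f 0 - ψ.f 0 = d₀ ≫ s₁) (h₁ : φ.f 1 - ψ.f 1 = d₁ ≫ s₂ + s₁ ≫ e₀)
    (h₂ : φ.f 2 - ψ.f 2 = d₂ ≫ s₃ + s₂ ≫ e₁) (h₃ : φ.f 3 - ψ.f 3 = s₃ ≫ e₂) :
    Homotopy φ ψ where
  -- The guard makes `zero` immediate: off the listed pairs the `match` does not reduce.
  hom p q :=
    if q + 1 = p then
      match p, q with
      | 1, 0 => s₁
      | 2, 1 => s₂
      | 3, 2 => s₃
      | _, _ => 0
    else 0
  zero p q hpq := if_neg hpq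
  comm n := by
    rw [← sub_eq_iff_eq_add]
    match n with
    | 0 =>
      rw [dNext_eq _ (show (ComplexShape.up ℤ).Rel 0 1 from rfl),
        prevD_eq _ (show (ComplexShape.up ℤ).Rel (-1) 0 from rfl),
        d_zero_one, d_neg_one_zero, comp_zero, add_zero]
      exact h₀
    | 1 =>
      rw [dNext_eq _ (show (ComplexShape.up ℤ).Rel 1 2 from rfl),
        prevD_eq _ (show (ComplexShape.up ℤ).Rel 0 1 from rfl), d_one_two, d_zero_one]
      exact h₁
    | 2 =>
      rw [dNext_eq _ (show (ComplexShape.up ℤ).Rel 2 3 from rfl),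
        prevD_eq _ (show (ComplexShape.up ℤ).Rel 1 2 from rfl), d_two_three, d_one_two]
      exact h₂
    | 3 =>
      rw [dNext_eq _ (show (ComplexShape.up ℤ).Rel 3 4 from rfl),
        prevD_eq _ (show (ComplexShape.up ℤ).Rel 2 3 from rfl), d_three_four, d_two_three,
        zero_comp, zero_add]
      exact h₃
    | (_ : ℕ) + 4 => exact (isZero_zero V).eq_of_src _ _
    | Int.negSucc _ => exact (isZero_zero V).eq_of_src _ _

end fourTermComplex

section GaussMaps

variable [IsIso h] (rel1 : a ≫ h + g ≫ i = 0) (rel2 : a ≫ j + g ≫ k = 0)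
  (rel3 : h ≫ m + j ≫ l = 0) (rel4 : i ≫ m + k ≫ l = 0)

noncomputable def gaussProjection :
    bigComplex a g h i j k m l rel1 rel2 rel3 rel4 ⟶
      smallComplex a g h i j k m l rel1 rel2 rel3 rel4 :=
  fourTermComplex.homMk (𝟙 P) (biprod.desc 0 (𝟙 R)) (biprod.desc (-(inv h ≫ j)) (𝟙 T)) (𝟙 U)
    (by simp)
    (by ext <;> simp [sub_eq_neg_add])
    (by
      have hjl : j ≫ l = -(h ≫ m) := eq_neg_of_add_eq_zero_right rel3
      ext <;> simp [hjl])

noncomputable def gaussInclusion :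
    smallComplex a g h i j k m l rel1 rel2 rel3 rel4 ⟶
      bigComplex a g h i j k m l rel1 rel2 rel3 rel4 :=
  fourTermComplex.homMk (𝟙 P) (biprod.lift (-(i ≫ inv h)) (𝟙 R)) (biprod.lift 0 (𝟙 T)) (𝟙 U)
    (by
      have hgi : g ≫ i = -(a ≫ h) := eq_neg_of_add_eq_zero_right rel1
      ext <;> simp [reassoc_of% hgi])
    (by ext <;> simp [sub_eq_neg_add])
    (by simp)

lemma gaussInclusion_comp_gaussProjection :
    gaussInclusion a g h i j k m l rel1 rel2 rel3 rel4 ≫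
      gaussProjection a g h i j k m l rel1 rel2 rel3 rel4 = 𝟙 _ := by
  apply fourTermComplex.hom_ext
  · exact Category.comp_id (𝟙 P)
  · change biprod.lift (-(i ≫ inv h)) (𝟙 R) ≫ biprod.desc 0 (𝟙 R) = 𝟙 R
    simp
  · change biprod.lift 0 (𝟙 T) ≫ biprod.desc (-(inv h ≫ j)) (𝟙 T) = 𝟙 T
    simp
  · exact Category.comp_id (𝟙 U)

noncomputable def gaussHomotopy :
    Homotopy (gaussProjection a g h i j k m l rel1 rel2 rel3 rel4 ≫
      gaussInclusion a g h i j k m l rel1 rel2 rel3 rel4) (𝟙 _) :=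
  fourTermComplex.homotopyMk _ _ 0 (-biprod.desc (inv h ≫ biprod.inl) 0) 0
    (show 𝟙 P ≫ 𝟙 P - 𝟙 P = biprod.lift a g ≫ 0 by simp)
    (by ext <;> simp :
      biprod.desc 0 (𝟙 R) ≫ biprod.lift (-(i ≫ inv h)) (𝟙 R) - 𝟙 (Q ⊞ R) =
        biprod.desc (biprod.lift h j) (biprod.lift i k) ≫ (-biprod.desc (inv h ≫ biprod.inl) 0) +
          0 ≫ biprod.lift a g)
    (by ext <;> simp :
      biprod.desc (-(inv h ≫ j)) (𝟙 T) ≫ biprod.lift 0 (𝟙 T) - 𝟙 (S ⊞ T) =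
        biprod.desc m l ≫ 0 +
          (-biprod.desc (inv h ≫ biprod.inl) 0) ≫ biprod.desc (biprod.lift h j) (biprod.lift i k))
    (show 𝟙 U ≫ 𝟙 U - 𝟙 U = 0 ≫ biprod.desc m l by simp)

end GaussMaps

/-- **Gauss elimination** (Bar-Natan).  If `h : Q ⟶ S` is an isomorphism, then the cochain
complex `P ⟶ Q ⊞ R ⟶ S ⊞ T ⟶ U` (concentrated in degrees `0, 1, 2, 3`) with differentials
`(a, g)`, `((h, i), (j, k))`, `(m, ℓ)` is homotopy equivalent to the cochain complex
`P ⟶ R ⟶ T ⟶ U` (concentrated in degrees `0, 1, 2, 3`) with differentials `g`,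
`k − j ∘ h⁻¹ ∘ i`, `ℓ`. -/
theorem gauss_elimination [IsIso h]
    (rel1 : a ≫ h + g ≫ i = 0) (rel2 : a ≫ j + g ≫ k = 0)
    (rel3 : h ≫ m + j ≫ l = 0) (rel4 : i ≫ m + k ≫ l = 0) :
    Nonempty
      (HomotopyEquiv (bigComplex a g h i j k m l rel1 rel2 rel3 rel4)
        (smallComplex a g h i j k m l rel1 rel2 rel3 rel4)) :=
  ⟨{ hom := gaussProjection a g h i j k m l rel1 rel2 rel3 rel4
     inv := gaussInclusion a g h i j k m l rel1 rel2 rel3 rel4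
     homotopyHomInvId := gaussHomotopy a g h i j k m l rel1 rel2 rel3 rel4
     homotopyInvHomId :=
      Homotopy.ofEq (gaussInclusion_comp_gaussProjection a g h i j k m l rel1 rel2 rel3 rel4) }⟩

end Gauss
end

section
/- Let n ≥ 2 and let R = ℂ[a_0, …, a_{n−1}] be the multivariate polynomial ring in n variables over ℂ, graded by assigning a_j the weight 2(n − j). Let b_0, …, b_{n−2} ∈ R be such that each b_i is weighted homogeneous of degree 2(n − 1 − i) with respect to these weights (so that q = x^{n−1} + Σ_{i=0}^{n−2} b_i x^i is homogeneous of degree 2n − 2 when x is given degree 2). Suppose that for every v = (v_0, …, v_{n−1}) ∈ ℂⁿ the following holds: setting P_v = X^n + Σ_{j=0}^{n−1} v_j X^j and Q_v = X^{n−1} + Σ_{i=0}^{n−2} b_i(v) X^i, and letting k_v denote the number of distinct complex roots of P_v, one has Σ_α min(rootMultiplicity α P_v, rootMultiplicity α Q_v) = n − k_v, where the sum runs over the distinct complex roots α of P_v. Then for every r ∈ {1, …, n−1}, the coefficient of the monomial a_r in b_{r−1} is not equal to 1. -/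
open Polynomial

lemma eval_ite_single {σ : Type*} [Fintype σ] [DecidableEq σ] (b : MvPolynomial σ ℂ)
    {w : σ → ℕ} {D : ℕ} (hb : b.IsWeightedHomogeneous w D) (r0 : σ) (hw : w r0 ≠ 0) :
    MvPolynomial.eval (fun j => if j = r0 then (1:ℂ) else 0) b
      = if w r0 ∣ D then MvPolynomial.coeff (Finsupp.single r0 (D / w r0)) b else 0 := by
  classical
  rw [MvPolynomial.eval_eq]
  have hprod : ∀ d : σ →₀ ℕ, d.support ⊆ {r0} →
      (∏ i ∈ d.support, (if i = r0 then (1:ℂ) else 0) ^ d i) = 1 := by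
    intro d hd
    apply Finset.prod_eq_one
    intro i hi
    have : i = r0 := Finset.mem_singleton.mp (hd hi)
    simp [this]
  have hprod0 : ∀ d : σ →₀ ℕ, ¬ d.support ⊆ {r0} →
      (∏ i ∈ d.support, (if i = r0 then (1:ℂ) else 0) ^ d i) = 0 := by
    intro d hd
    obtain ⟨i, hi, hir⟩ : ∃ i ∈ d.support, i ≠ r0 := by
      by_contra h
      push_neg at h
      exact hd fun i hi => Finset.mem_singleton.mpr (h i hi)
    refine Finset.prod_eq_zero hi ?_
    have : d i ≠ 0 := Finsupp.mem_support_iff.mp hi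
    simp [hir, zero_pow this]
  by_cases hdvd : w r0 ∣ D
  · rw [if_pos hdvd]
    rw [Finset.sum_eq_single (Finsupp.single r0 (D / w r0))]
    · rw [hprod _ Finsupp.support_single_subset, mul_one]
    · intro d hd hne
      by_cases hsub : d.support ⊆ {r0}
      · exfalso
        have hd' : d = Finsupp.single r0 (d r0) :=
          Finsupp.support_subset_singleton.mp hsub
        have hc : MvPolynomial.coeff d b ≠ 0 := MvPolynomial.mem_support_iff.mp hd
        have hwd := hb hc
        rw [hd'] at hwd
        rw [Finsupp.weight_apply, Finsupp.sum_single_index (by simp)] at hwd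
        have : d r0 * w r0 = D := by simpa [smul_eq_mul] using hwd
        have : d r0 = D / w r0 := by
          rw [← this, Nat.mul_div_cancel _ (Nat.pos_of_ne_zero hw)]
        exact hne (hd'.trans (by rw [this]))
      · rw [hprod0 _ hsub, mul_zero]
    · intro h
      rw [MvPolynomial.notMem_support_iff.mp h, zero_mul]
  · rw [if_neg hdvd]
    apply Finset.sum_eq_zero
    intro d hd
    by_cases hsub : d.support ⊆ {r0}
    · exfalso
      have hd' : d = Finsupp.single r0 (d r0) :=
        Finsupp.support_subset_singleton.mp hsub
      have hc : MvPolynomial.coeff d b ≠ 0 := MvPolynomial.mem_support_iff.mp hd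
      have hwd := hb hc
      rw [hd'] at hwd
      rw [Finsupp.weight_apply, Finsupp.sum_single_index (by simp)] at hwd
      exact hdvd ⟨d r0, by simpa [smul_eq_mul, mul_comm] using hwd.symm⟩
    · rw [hprod0 _ hsub, mul_zero]


lemma aux_calc {n r m : ℕ} (hr1 : 1 ≤ r) (hm1 : 1 ≤ m) (hrm : r + m = n)
    (Q : Polynomial ℂ) (hQ : Q ≠ 0) (S : ℂ)
    (hQeval : ∀ α : ℂ, α ^ m = -1 → Q.eval α = α ^ (n - 1) * S)
    (hsum : ((X : Polynomial ℂ) ^ n + X ^ r).roots.toFinset.sum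
        (fun α => min (((X : Polynomial ℂ) ^ n + X ^ r).rootMultiplicity α)
          (Q.rootMultiplicity α))
      = n - ((X : Polynomial ℂ) ^ n + X ^ r).roots.toFinset.card) :
    min r Q.natTrailingDegree + (if S = 0 then m else 0) = r - 1 := by
  classical
  set W : Polynomial ℂ := X ^ m - C (-1) with hWdef
  have hWne : W ≠ 0 := X_pow_sub_C_ne_zero (by omega) _
  have hsepW : W.Separable :=
    separable_X_pow_sub_C (-1) (Nat.cast_ne_zero.mpr (by omega)) (by norm_num)
  have hnodup : W.roots.Nodup := nodup_roots hsepW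
  have hcardW : Multiset.card W.roots = m := by
    rw [splits_iff_card_roots.mp (IsAlgClosed.splits W), hWdef,
      natDegree_X_pow_sub_C]
  have hmemW : ∀ α : ℂ, α ∈ W.roots ↔ α ^ m = -1 := by
    intro α
    rw [mem_roots hWne]
    simp only [hWdef, IsRoot, eval_sub, eval_pow, eval_X, eval_C, sub_eq_zero]
  have h0W : (0 : ℂ) ∉ W.roots := by
    rw [hmemW]
    rw [zero_pow (by omega : m ≠ 0)]
    norm_num
  have hPfac : (X : Polynomial ℂ) ^ n + X ^ r = X ^ r * W := by
    rw [hWdef, mul_sub, ← pow_add, hrm, map_neg, map_one, mul_neg, mul_one, sub_neg_eq_add,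
      add_comm]
  have hPne : (X : Polynomial ℂ) ^ n + X ^ r ≠ 0 := by
    rw [hPfac]
    exact mul_ne_zero (pow_ne_zero _ X_ne_zero) hWne
  have hrootsP : ((X : Polynomial ℂ) ^ n + X ^ r).roots = r • {0} + W.roots := by
    rw [hPfac, roots_mul (hPfac ▸ hPne), roots_pow, roots_X]
  have htofin : ((X : Polynomial ℂ) ^ n + X ^ r).roots.toFinset
      = insert (0 : ℂ) W.roots.toFinset := by
    rw [hrootsP, Multiset.toFinset_add, Multiset.toFinset_nsmul _ r (by omega),
      Multiset.toFinset_singleton, Finset.insert_eq]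
  have h0notin : (0 : ℂ) ∉ W.roots.toFinset := fun h => h0W (Multiset.mem_toFinset.mp h)
  have hcardfin : ((X : Polynomial ℂ) ^ n + X ^ r).roots.toFinset.card = 1 + m := by
    rw [htofin, Finset.card_insert_of_notMem h0notin,
      Multiset.toFinset_card_of_nodup hnodup, hcardW]
    omega
  have hmultP0 : ((X : Polynomial ℂ) ^ n + X ^ r).rootMultiplicity 0 = r := by
    rw [← count_roots, hrootsP, Multiset.count_add, Multiset.count_nsmul,
      Multiset.count_singleton_self, Multiset.count_eq_zero_of_notMem h0W]
    omega
  have hmultQ0 : Q.rootMultiplicity 0 = Q.natTrailingDegree :=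
    rootMultiplicity_eq_natTrailingDegree'
  have hmultPα : ∀ α ∈ W.roots.toFinset,
      ((X : Polynomial ℂ) ^ n + X ^ r).rootMultiplicity α = 1 := by
    intro α hα
    have hαW : α ∈ W.roots := Multiset.mem_toFinset.mp hα
    have hα0 : α ≠ 0 := fun h => h0W (h ▸ hαW)
    rw [← count_roots, hrootsP, Multiset.count_add, Multiset.count_nsmul,
      Multiset.count_singleton, if_neg hα0, mul_zero, zero_add,
      Multiset.count_eq_one_of_mem hnodup hαW]
  have hminα : ∀ α ∈ W.roots.toFinset,
      min (((X : Polynomial ℂ) ^ n + X ^ r).rootMultiplicity α) (Q.rootMultiplicity α)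
        = if S = 0 then 1 else 0 := by
    intro α hα
    have hαW : α ∈ W.roots := Multiset.mem_toFinset.mp hα
    have hαm : α ^ m = -1 := (hmemW α).mp hαW
    have hα0 : α ≠ 0 := fun h => h0W (h ▸ hαW)
    rw [hmultPα α hα]
    by_cases hS : S = 0
    · rw [if_pos hS]
      have hpos : 0 < Q.rootMultiplicity α :=
        (rootMultiplicity_pos hQ).mpr (by rw [IsRoot, hQeval α hαm, hS, mul_zero])
      omega
    · rw [if_neg hS]
      have : Q.rootMultiplicity α = 0 := by
        apply rootMultiplicity_eq_zero
        rw [IsRoot, hQeval α hαm]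
        exact mul_ne_zero (pow_ne_zero _ hα0) hS
      simp [this]
  rw [htofin, Finset.sum_insert h0notin, hmultP0, hmultQ0,
    Finset.sum_congr rfl hminα, Finset.sum_const,
    Finset.card_insert_of_notMem h0notin,
    Multiset.toFinset_card_of_nodup hnodup, hcardW] at hsum
  have hite : (if S = 0 then m else 0) = m • (if S = 0 then 1 else 0) := by
    split_ifs <;> simp
  rw [hite, hsum]
  omega


/-- Let `n ≥ 2` and `R = ℂ[a_0, …, a_{n−1}]`, graded by giving `a_j` the weight `2(n − j)`.
Let `b_0, …, b_{n−2} ∈ R` with `b_i` weighted homogeneous of degree `2(n − 1 − i)`.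
Suppose that for every `v ∈ ℂⁿ`, setting `P_v = Xⁿ + Σ_j v_j X^j`,
`Q_v = X^{n−1} + Σ_i b_i(v) X^i` and letting `k_v` be the number of distinct roots of `P_v`,
one has `Σ_α min(rootMultiplicity α P_v, rootMultiplicity α Q_v) = n − k_v` (sum over the
distinct roots `α` of `P_v`).  Then for each `i`, the coefficient of the monomial `a_{i+1}`
in `b_i` is not equal to `1` (i.e. for `r ∈ {1, …, n−1}`, the coefficient of `a_r` in
`b_{r−1}` is not `1`). -/
theorem coeff_ne_one_of_multiplicity_condition (n : ℕ) (hn : 2 ≤ n)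
    (b : Fin (n - 1) → MvPolynomial (Fin n) ℂ)
    (hb : ∀ i : Fin (n - 1), (b i).IsWeightedHomogeneous
      (fun j : Fin n => 2 * (n - (j : ℕ))) (2 * (n - 1 - (i : ℕ))))
    (hdag : ∀ v : Fin n → ℂ,
      (X ^ n + ∑ j : Fin n, C (v j) * X ^ (j : ℕ) : Polynomial ℂ).roots.toFinset.sum
          (fun α => min
            ((X ^ n + ∑ j : Fin n, C (v j) * X ^ (j : ℕ) : Polynomial ℂ).rootMultiplicity α)
            ((X ^ (n - 1) + ∑ i : Fin (n - 1),
                C (MvPolynomial.eval v (b i)) * X ^ (i : ℕ) : Polynomial ℂ).rootMultiplicity α))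
        = n - (X ^ n + ∑ j : Fin n, C (v j) * X ^ (j : ℕ) : Polynomial ℂ).roots.toFinset.card) :
    ∀ i : Fin (n - 1),
      MvPolynomial.coeff (Finsupp.single (⟨(i : ℕ) + 1, by omega⟩ : Fin n) 1) (b i) ≠ 1 := by
  intro i hcoeff
  have hin : (i : ℕ) < n - 1 := i.2
  set r : ℕ := (i : ℕ) + 1 with hrdef
  set m : ℕ := n - r with hmdef
  have hr1 : 1 ≤ r := Nat.le_add_left 1 _
  have hrn : r ≤ n - 1 := by omega
  have hm1 : 1 ≤ m := by omega
  have hrm : r + m = n := by omega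
  set r0 : Fin n := ⟨r, by omega⟩ with hr0def
  set v : Fin n → ℂ := fun j => if j = r0 then (1 : ℂ) else 0 with hvdef
  -- the evaluations of the b i'
  set c : Fin (n - 1) → ℂ := fun i' => MvPolynomial.eval v (b i') with hcdef
  have hev : ∀ i' : Fin (n - 1), c i' =
      if m ∣ (n - 1 - (i' : ℕ)) then
        MvPolynomial.coeff (Finsupp.single r0 ((n - 1 - (i' : ℕ)) / m)) (b i') else 0 := by
    intro i'
    have hr0val : ((r0 : Fin n) : ℕ) = r := rfl
    have h := eval_ite_single (b i') (hb i') r0 (by simp only [hr0val]; omega)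
    simp only [hr0val, ← hmdef] at h
    rw [← hvdef] at h
    simp only [hcdef]
    rw [h]
    by_cases hdvd : m ∣ (n - 1 - (i' : ℕ))
    · rw [if_pos (mul_dvd_mul_left 2 hdvd), if_pos hdvd,
        Nat.mul_div_mul_left _ _ (by norm_num : 0 < 2)]
    · rw [if_neg (fun h2 => hdvd ((mul_dvd_mul_iff_left (by norm_num : (2:ℕ) ≠ 0)).mp h2)),
        if_neg hdvd]
  have hci : c i = 1 := by
    rw [hev i, if_pos (by rw [show n - 1 - (i : ℕ) = m by omega])]
    rw [show n - 1 - (i : ℕ) = m by omega, Nat.div_self (by omega)]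
    exact hcoeff
  have hctop : ∀ i' : Fin (n - 1), (i : ℕ) < (i' : ℕ) → c i' = 0 := by
    intro i' hlt
    rw [hev i', if_neg]
    intro hdvd
    have h1 : 0 < n - 1 - (i' : ℕ) := by have := i'.2; omega
    have h2 : n - 1 - (i' : ℕ) < m := by omega
    exact absurd (Nat.le_of_dvd h1 hdvd) (by omega)
  -- strict between: not divisible
  have hcmid : ∀ i' : Fin (n - 1), r - 1 - m < (i' : ℕ) → (i' : ℕ) < (i : ℕ) → c i' = 0 := by
    intro i' h1 h2
    rw [hev i', if_neg]
    rintro ⟨q, hq⟩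
    have hk1 : m < n - 1 - (i' : ℕ) := by omega
    have hk2 : n - 1 - (i' : ℕ) < 2 * m := by omega
    have : q ≤ 1 ∨ 2 ≤ q := by omega
    rcases this with h | h
    · interval_cases q <;> omega
    · have : m * 2 ≤ m * q := Nat.mul_le_mul_left m h
      omega
  -- the polynomial Q
  set Q : Polynomial ℂ := X ^ (n - 1) + ∑ i' : Fin (n - 1), C (c i') * X ^ (i' : ℕ) with hQdef
  have hQcoeff : ∀ (j : ℕ) (hj : j < n - 1), Q.coeff j = c ⟨j, hj⟩ := by
    intro j hj
    rw [hQdef, coeff_add, coeff_X_pow, if_neg (by omega), zero_add, finset_sum_coeff]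
    rw [Finset.sum_eq_single (⟨j, hj⟩ : Fin (n - 1))]
    · simp
    · intro i' _ hne
      rw [coeff_C_mul, coeff_X_pow, if_neg (fun h => hne (Fin.ext h.symm)), mul_zero]
    · simp
  have hQtop : Q.coeff (n - 1) = 1 := by
    rw [hQdef, coeff_add, coeff_X_pow, if_pos rfl, finset_sum_coeff]
    rw [Finset.sum_eq_zero, add_zero]
    intro i' _
    rw [coeff_C_mul, coeff_X_pow, if_neg (by have := i'.2; omega), mul_zero]
  have hQne : Q ≠ 0 := fun h => by rw [h, coeff_zero] at hQtop; exact one_ne_zero hQtop.symm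
  set m0 : ℕ := Q.natTrailingDegree with hm0def
  have hm0le : m0 ≤ n - 1 := natTrailingDegree_le_of_ne_zero (hQtop ▸ one_ne_zero)
  have hclow : ∀ i' : Fin (n - 1), (i' : ℕ) < m0 → c i' = 0 := by
    intro i' h
    rw [← hQcoeff (i' : ℕ) i'.2]
    · exact coeff_eq_zero_of_lt_natTrailingDegree h
  have hctrail : Q.coeff m0 ≠ 0 := by
    have := mt trailingCoeff_eq_zero.mp hQne
    rwa [trailingCoeff] at this
  -- the constant S
  set S : ℂ := 1 + ∑ i' : Fin (n - 1), c i' * (-1) ^ ((n - 1 - (i' : ℕ)) / m) with hSdef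
  have hQeval : ∀ α : ℂ, α ^ m = -1 → Q.eval α = α ^ (n - 1) * S := by
    intro α hα
    have hα0 : α ≠ 0 := by
      intro h
      rw [h, zero_pow (by omega : m ≠ 0)] at hα
      exact one_ne_zero (neg_eq_zero.mp hα.symm)
    rw [hQdef, hSdef, eval_add, eval_pow, eval_X, eval_finset_sum, mul_add, mul_one]
    congr 1
    rw [Finset.mul_sum]
    apply Finset.sum_congr rfl
    intro i' _
    rw [eval_mul, eval_C, eval_pow, eval_X]
    by_cases hc0 : c i' = 0
    · rw [hc0, zero_mul, zero_mul, mul_zero]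
    · have hdvd : m ∣ (n - 1 - (i' : ℕ)) := by
        by_contra hnd
        exact hc0 (by rw [hev i', if_neg hnd])
      obtain ⟨e, he⟩ := hdvd
      have hdiv : (n - 1 - (i' : ℕ)) / m = e := by
        rw [he, Nat.mul_div_cancel_left _ (by omega : 0 < m)]
      have hi'e : (i' : ℕ) + m * e = n - 1 := by have := i'.2; omega
      have hpow : α ^ (n - 1) = α ^ (i' : ℕ) * (-1 : ℂ) ^ e := by
        conv_lhs => rw [← hi'e]
        rw [pow_add, pow_mul, hα]
      have h1 : ((-1 : ℂ)) ^ e * (-1) ^ e = 1 := by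
        rw [← mul_pow]; norm_num
      rw [hdiv, hpow]
      linear_combination (-(α ^ (i' : ℕ)) * c i') * h1
  -- apply the hypothesis at v
  have key := hdag v
  have hPsum : (∑ j : Fin n, C (v j) * X ^ (j : ℕ) : Polynomial ℂ) = X ^ r := by
    rw [Finset.sum_eq_single r0]
    · simp [hvdef, hr0def]
    · intro j _ hne
      simp [hvdef, if_neg hne]
    · simp
  rw [hPsum] at key
  have harith := aux_calc hr1 hm1 hrm Q hQne S hQeval key
  rw [← hm0def] at harith
  -- case analysis on S
  by_cases hS : S = 0
  · rw [if_pos hS] at harith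
    have hmr : m ≤ r - 1 := by
      rcases min_cases r m0 with ⟨h1, _⟩ | ⟨h1, _⟩ <;> omega
    have hm0val : m0 = r - 1 - m := by
      rcases min_cases r m0 with ⟨h1, h2⟩ | ⟨h1, h2⟩ <;> omega
    set j : Fin (n - 1) := ⟨r - 1 - m, by omega⟩ with hjdef
    have hij : j ≠ i := by
      intro h
      have := congrArg (Fin.val) h
      simp only [hjdef] at this
      omega
    have hcj : c j ≠ 0 := by
      have : Q.coeff (r - 1 - m) ≠ 0 := by rw [← hm0val]; exact hctrail
      rwa [hQcoeff (r - 1 - m) (by omega)] at this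
    have hSval : S = c j := by
      rw [hSdef]
      have hsub : ({j, i} : Finset (Fin (n - 1))) ⊆ Finset.univ := Finset.subset_univ _
      rw [← Finset.sum_subset hsub]
      · rw [Finset.sum_pair hij]
        have hji : (n - 1 - (j : ℕ)) / m = 2 := by
          rw [show n - 1 - (j : ℕ) = 2 * m by simp only [hjdef]; omega,
            Nat.mul_div_cancel _ (by omega : 0 < m)]
        have hii : (n - 1 - (i : ℕ)) / m = 1 := by
          rw [show n - 1 - (i : ℕ) = m by omega, Nat.div_self (by omega)]
        rw [hji, hii, hci]
        ring
      · intro x _ hx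
        simp only [Finset.mem_insert, Finset.mem_singleton] at hx
        push_neg at hx
        obtain ⟨hxj, hxi⟩ := hx
        have hxi' : (x : ℕ) ≠ (i : ℕ) := fun h => hxi (Fin.ext h)
        have hxj' : (x : ℕ) ≠ (j : ℕ) := fun h => hxj (Fin.ext h)
        simp only [hjdef] at hxj'
        rcases Nat.lt_or_ge (x : ℕ) (r - 1 - m) with h | h
        · rw [hclow x (by omega), zero_mul]
        · rcases Nat.lt_or_ge (x : ℕ) (i : ℕ) with h2 | h2
          · rw [hcmid x (by omega) h2, zero_mul]
          · rw [hctop x (by omega), zero_mul]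
    exact hcj (by rw [← hSval, hS])
  · rw [if_neg hS] at harith
    have hm0val : m0 = r - 1 := by
      rcases min_cases r m0 with ⟨h1, h2⟩ | ⟨h1, h2⟩ <;> omega
    apply hS
    rw [hSdef]
    rw [Finset.sum_eq_single i]
    · rw [hci, show n - 1 - (i : ℕ) = m by omega, Nat.div_self (by omega)]
      ring
    · intro x _ hxi
      have hxi' : (x : ℕ) ≠ (i : ℕ) := fun h => hxi (Fin.ext h)
      rcases Nat.lt_or_ge (x : ℕ) (i : ℕ) with h2 | h2
      · rw [hclow x (by omega), zero_mul]
      · rw [hctop x (by omega), zero_mul]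
    · simp
end

section
/- Let p be an integer and q a positive integer with gcd(p, q) = 1, and suppose that p is even or q is even. Then there exist an integer k ≥ 1 and even integers a_1, …, a_k such that the rational numbers defined recursively by c_1 = a_1 and c_{j+1} = a_{j+1} + 1/c_j satisfy c_j ≠ 0 for all 1 ≤ j < k, and c_k = p/q. -/
def ECF (p q : ℤ) : Prop :=
    ∃ (k : ℕ) (a : ℕ → ℤ) (c : ℕ → ℚ),
      1 ≤ k ∧
      (∀ i < k, Even (a i)) ∧
      c 0 = a 0 ∧
      (∀ i, i + 1 < k → c (i + 1) = a (i + 1) + 1 / c i) ∧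
      (∀ i, i + 1 < k → c i ≠ 0) ∧
      c (k - 1) = (p : ℚ) / (q : ℚ)

theorem ecf_aux (n : ℕ) : ∀ p q : ℤ, 0 < q → q.toNat ≤ n → Int.gcd p q = 1 →
    (Even p ∨ Even q) → ECF p q := by
  induction n with
  | zero => intro p q hq hn _ _; omega
  | succ n ih =>
    intro p q hq hn hpq heven
    by_cases hq1 : q = 1
    · subst hq1
      have hp : Even p := by
        rcases heven with h | h
        · exact h
        · exact absurd h (by decide)
      refine ⟨1, fun _ => p, fun _ => (p : ℚ), le_refl 1, ?_, by norm_num, ?_, ?_, by norm_num⟩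
      · intro i _; exact hp
      · intro i hi; omega
      · intro i hi; omega
    · have hq2 : 2 ≤ q := by omega
      set A : ℤ := if p % (2*q) < q then 2*(p/(2*q)) else 2*(p/(2*q)) + 2 with hA
      set r : ℤ := p - A*q with hr
      have h2q : (0:ℤ) < 2*q := by omega
      have hmod0 : 0 ≤ p % (2*q) := Int.emod_nonneg p (by omega)
      have hmod1 : p % (2*q) < 2*q := Int.emod_lt_of_pos p h2q
      have hdiv : p % (2*q) = p - 2*q*(p/(2*q)) := by
        have := Int.emod_add_mul_ediv p (2*q); omega
      have hrval : r = if p % (2*q) < q then p % (2*q) else p % (2*q) - 2*q := by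
        rw [hr, hA]; split <;> [skip; skip] <;> rw [hdiv] <;> ring
      have hr1 : -q ≤ r := by rw [hrval]; split <;> omega
      have hr2 : r < q := by rw [hrval]; split <;> omega
      have hA_even : Even A := by
        rw [hA]; split
        · exact ⟨p/(2*q), by ring⟩
        · exact ⟨p/(2*q)+1, by ring⟩
      have hcop : IsCoprime p q := Int.isCoprime_iff_gcd_eq_one.mpr hpq
      have hcop_r : IsCoprime r q := by
        have := hcop.add_mul_left_left (-A)
        have e : p + q * (-A) = r := by rw [hr]; ring
        rwa [e] at this
      have hgcd_r : Int.gcd r q = 1 := Int.isCoprime_iff_gcd_eq_one.mp hcop_r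
      have hrne : r ≠ 0 := by
        intro h
        rw [h] at hgcd_r
        simp [Int.gcd] at hgcd_r
        omega
      have hrneq : r ≠ -q := by
        intro h
        rw [h] at hgcd_r
        simp [Int.gcd] at hgcd_r
        omega
      -- new pair
      set P : ℤ := if 0 < r then q else -q with hP
      set Q : ℤ := |r| with hQ
      have hQpos : 0 < Q := abs_pos.mpr hrne
      have hQlt : Q < q := abs_lt.mpr ⟨by omega, hr2⟩
      have hQn : Q.toNat ≤ n := by omega
      have hgcdPQ : Int.gcd P Q = 1 := by
        rw [hP, hQ]
        rcases abs_choice r with h | h <;> rw [h] <;> split <;>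
          simp [Int.gcd, Int.natAbs_neg, Nat.gcd_comm] at hgcd_r ⊢ <;>
          omega
      have hevenPQ : Even P ∨ Even Q := by
        have hrp : (Even r ↔ Even p) := by
          rw [hr]
          constructor
          · intro h; have := h.add (hA_even.mul_right q); simpa using this
          · intro h; exact h.sub (hA_even.mul_right q)
        rcases heven with h | h
        · right
          rcases abs_choice r with h2 | h2 <;> rw [hQ, h2]
          · exact hrp.mpr h
          · exact (hrp.mpr h).neg
        · left; rw [hP]; split
          · exact h
          · exact h.neg
      obtain ⟨k, a', c', hk, hae, hc0, hrec, hne, hval⟩ := ih P Q hQpos hQn hgcdPQ hevenPQ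
      have hcval : c' (k - 1) = (q : ℚ) / (r : ℚ) := by
        rw [hval]
        by_cases h : 0 < r
        · rw [hP, hQ, if_pos h, abs_of_pos h]
        · have hneg : r < 0 := by omega
          rw [hP, hQ, if_neg h, abs_of_neg hneg]
          push_cast
          rw [neg_div_neg_eq]
      refine ⟨k + 1, fun i => if i < k then a' i else A, fun i => if i < k then c' i else (p : ℚ) / q,
        by omega, ?_, ?_, ?_, ?_, ?_⟩
      · intro i hi
        by_cases h : i < k
        · simp [h]; exact hae i h
        · simp [h]; exact hA_even
      · simp [Nat.lt_of_lt_of_le Nat.zero_lt_one hk, hc0]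
      · intro i hi
        by_cases h : i + 1 < k
        · have hik : i < k := by omega
          simp only [if_pos h, if_pos hik]
          rw [hrec i h]
        · have hik' : i < k := by omega
          have hi1 : i = k - 1 := by omega
          simp only [if_neg h, if_pos hik']
          rw [hi1, hcval]
          have hq0 : (q : ℚ) ≠ 0 := by exact_mod_cast (by omega : q ≠ 0)
          have hr0 : (r : ℚ) ≠ 0 := by exact_mod_cast hrne
          have hpr : (p : ℚ) = A * q + r := by
            have : p = A * q + r := by rw [hr]; ring
            exact_mod_cast this
          rw [one_div_div, hpr]
          field_simp
      · intro i hi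
        have hik : i < k := by omega
        simp only [if_pos hik]
        by_cases h : i + 1 < k
        · exact hne i h
        · have : i = k - 1 := by omega
          rw [this, hcval]
          have hq0 : (q : ℚ) ≠ 0 := by exact_mod_cast (by omega : q ≠ 0)
          have hr0 : (r : ℚ) ≠ 0 := by exact_mod_cast hrne
          exact div_ne_zero hq0 hr0
      · simp

/-- Let `p` be an integer and `q` a positive integer with `gcd(p, q) = 1`, and suppose that
`p` is even or `q` is even.  Then `p/q` is the value of a continued fraction
`[a_1, …, a_k] = a_k + 1/(a_{k−1} + 1/(⋯ + 1/a_1))` with all entries `a_i` even integers,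
all intermediate values nonzero so that the divisions are legitimate.
Here `a i` and `c i` (for `i < k`) stand for `a_{i+1}` and `c_{i+1}` respectively. -/
theorem even_continued_fraction (p : ℤ) (q : ℤ) (hq : 0 < q) (hpq : Int.gcd p q = 1)
    (heven : Even p ∨ Even q) :
    ∃ (k : ℕ) (a : ℕ → ℤ) (c : ℕ → ℚ),
      1 ≤ k ∧
      (∀ i < k, Even (a i)) ∧
      c 0 = a 0 ∧
      (∀ i, i + 1 < k → c (i + 1) = a (i + 1) + 1 / c i) ∧
      (∀ i, i + 1 < k → c i ≠ 0) ∧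
      c (k - 1) = (p : ℚ) / (q : ℚ) := by
  exact ecf_aux q.toNat p q hq le_rfl hpq heven
end

section
/- Let n ≥ 2, let c ≥ 1, and let ξ ∈ ℂ be a primitive (n−1)-st root of unity (ξ = 1 when n = 2). For 0 ≤ i ≤ n−2 define the polynomial g_i ∈ ℂ[x_1, …, x_c] by g_i = ∏_{m=1}^{c} ( x_m · ∏_{0 ≤ j ≤ n−2, j ≠ i} (x_m − ξ^j) ). Then the ℂ-linear span of {g_0, …, g_{n−2}} in ℂ[x_1, …, x_c] has dimension n − 1, and it admits a basis h_0, …, h_{n−2} such that for each d, every monomial occurring in h_d has total degree congruent to d modulo n − 1. -/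
/-!
Write `k = n - 1`. Since `∏_j (X - ξ^j) = X^k - 1`, the factor `X ∏_{j ≠ i} (X - ξ^j)` is the
geometric sum `∑_{e=1}^k (ξ^{-i} X)^e`, so `g_i = ∑ ξ^{-i|μ|} x^μ` over the box `μ ∈ [1, k]^c`.
Grouping the monomials by `|μ| mod k` gives `g_i = ∑_d ξ^{-id} h_d`, where `h_d` is the sum of the
`x^μ` in the box with `|μ| ≡ d`. The `h_d` are nonzero (the box meets every residue class once
`c ≥ 1`) and homogeneous of distinct degrees for the `ℤ/k`-grading, hence linearly independent,
and the transition matrix `(ξ^{-id})` is a Vandermonde matrix with distinct nodes.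
-/

open Polynomial in
theorem IsPrimitiveRoot.X_mul_prod_erase_X_sub_C {K : Type*} [Field K] {k : ℕ} {ξ : K}
    (hξ : IsPrimitiveRoot ξ k) (i : Fin k) :
    X * ∏ j ∈ Finset.univ.erase i, (X - C (ξ ^ (j : ℕ)))
      = ∑ e ∈ Finset.Icc 1 k, (C (ξ ^ (i : ℕ))⁻¹ * X) ^ e := by
  have hk : 0 < k := i.pos
  set a := ξ ^ (i : ℕ)
  have ha : a ≠ 0 := pow_ne_zero _ (hξ.ne_zero hk.ne')
  have hak : a ^ k = 1 := by rw [← pow_mul, mul_comm, pow_mul, hξ.pow_eq_one, one_pow]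
  have hprod : ∏ j : Fin k, (X - C (ξ ^ (j : ℕ))) = X ^ k - 1 := by
    rw [Fin.prod_univ_eq_prod_range (fun j => X - C (ξ ^ j)), ← C_1,
      X_pow_sub_C_eq_prod hξ hk (one_pow k)]
    simp
  set Y := C a⁻¹ * X
  have hX : X = C a * Y := by rw [← mul_assoc, ← C_mul, mul_inv_cancel₀ ha, C_1, one_mul]
  have hXk : X ^ k = Y ^ k := by rw [hX, mul_pow, ← C_pow, hak, C_1, one_mul]
  apply mul_right_cancel₀ (X_sub_C_ne_zero a)
  calc (X * ∏ j ∈ Finset.univ.erase i, (X - C (ξ ^ (j : ℕ)))) * (X - C a)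
      = X * (X ^ k - 1) := by
        rw [mul_assoc, mul_comm _ (X - C a), hprod.symm,
          ← Finset.mul_prod_erase _ (fun j : Fin k => X - C (ξ ^ (j : ℕ))) (Finset.mem_univ i)]
    _ = C a * (Y ^ (k + 1) - Y ^ 1) := by rw [hXk, pow_succ, pow_one]; nth_rw 1 [hX]; ring
    _ = (∑ e ∈ Finset.Icc 1 k, Y ^ e) * (X - C a) := by
        rw [← Finset.Ico_add_one_right_eq_Icc, ← geom_sum_Ico_mul Y (by omega), hX]; ring

open MvPolynomial Finsupp

theorem Finsupp.weight_one_eq_natCast_degree {σ M : Type*} [AddCommMonoidWithOne M]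
    (μ : σ →₀ ℕ) : weight (1 : σ → M) μ = (μ.degree : M) := by
  simp [weight_apply, degree_apply, Finsupp.sum]

namespace MvPolynomial

variable {R : Type*} [CommSemiring R] {σ : Type*} [Fintype σ] [DecidableEq σ]

variable (σ) in
noncomputable def exponentBox (k : ℕ) : Finset (σ →₀ ℕ) :=
  (Fintype.piFinset fun _ : σ => Finset.Icc 1 k).map equivFunOnFinite.symm.toEmbedding

theorem mem_exponentBox {k : ℕ} {μ : σ →₀ ℕ} :
    μ ∈ exponentBox σ k ↔ ∀ m, μ m ∈ Finset.Icc 1 k := by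
  simp [exponentBox, Finset.mem_map_equiv]

theorem prod_sum_Icc_C_mul_X_pow (k : ℕ) (t : R) :
    ∏ m : σ, ∑ e ∈ Finset.Icc 1 k, (C t * X m) ^ e
      = ∑ μ ∈ exponentBox σ k, C (t ^ μ.degree) * monomial μ 1 := by
  rw [Finset.prod_univ_sum, exponentBox, Finset.sum_map]
  refine Finset.sum_congr rfl fun e _ => ?_
  simp only [mul_pow, Finset.prod_mul_distrib, ← map_pow, ← map_prod, Finset.prod_pow_eq_pow_sum,
    monomial_eq, C_1, one_mul, degree_eq_sum, Equiv.coe_toEmbedding]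
  rw [Finsupp.prod_fintype _ _ (fun _ => pow_zero _)]
  rfl

section Residue

variable (R σ) in
noncomputable def residueClassSum (k : ℕ) (d : Fin k) : MvPolynomial σ R :=
  ∑ μ ∈ exponentBox σ k with μ.degree % k = d, monomial μ 1

variable {k : ℕ}

theorem residueClassSum_mem_weightedHomogeneousSubmodule (d : Fin k) :
    residueClassSum R σ k d ∈ weightedHomogeneousSubmodule R (1 : σ → ZMod k) (d : ℕ) :=
  IsWeightedHomogeneous.sum _ _ _ fun μ hμ => isWeightedHomogeneous_monomial _ _ _ <| by
    rw [weight_one_eq_natCast_degree, ← (Finset.mem_filter.1 hμ).2, ZMod.natCast_mod]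

theorem degree_mod_eq_of_mem_support_residueClassSum {d : Fin k} {μ : σ →₀ ℕ}
    (hμ : μ ∈ (residueClassSum R σ k d).support) : μ.degree % k = d := by
  have := residueClassSum_mem_weightedHomogeneousSubmodule d (mem_support_iff.1 hμ)
  rwa [weight_one_eq_natCast_degree, ZMod.natCast_eq_natCast_iff',
    Nat.mod_eq_of_lt (a := d) d.isLt] at this

theorem sum_exponentBox_C_pow_mul_monomial [NeZero k] {t : R} (ht : t ^ k = 1) :
    ∑ μ ∈ exponentBox σ k, C (t ^ μ.degree) * monomial μ 1
      = ∑ d : Fin k, t ^ (d : ℕ) • residueClassSum R σ k d := by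
  rw [← Finset.sum_fiberwise (exponentBox σ k) fun μ => (Fin.ofNat k μ.degree)]
  refine Finset.sum_congr rfl fun d _ => ?_
  rw [residueClassSum, Finset.smul_sum]
  simp only [Fin.ext_iff, Fin.val_ofNat]
  refine Finset.sum_congr rfl fun μ hμ => ?_
  rw [smul_eq_C_mul, pow_eq_pow_mod _ ht, (Finset.mem_filter.1 hμ).2]

theorem exists_mem_exponentBox_degree_mod_eq [Nonempty σ] (d : Fin k) :
    ∃ μ ∈ exponentBox σ k, μ.degree % k = d := by
  obtain ⟨m₀⟩ := ‹Nonempty σ›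
  obtain ⟨k, rfl⟩ : ∃ k', k = k' + 1 := Nat.exists_eq_add_one_of_ne_zero d.pos.ne'
  -- all ones except `1 + s` at `m₀`, where `card σ + s ≡ d + (k + 1) * card σ ≡ d`
  set s := (d + k * Fintype.card σ) % (k + 1)
  refine ⟨equivFunOnFinite.symm 1 + single m₀ s, mem_exponentBox.2 fun m => ?_, ?_⟩
  · have : s < k + 1 := Nat.mod_lt _ k.succ_pos
    rw [Finset.mem_Icc, Finsupp.add_apply, single_apply]
    split_ifs <;> simp
    omega
  · rw [map_add, degree_single, degree_eq_sum]
    have hones : ∑ m, equivFunOnFinite.symm (1 : σ → ℕ) m = Fintype.card σ := by simp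
    rw [hones, Nat.add_mod_mod,
      show Fintype.card σ + (d + k * Fintype.card σ) = d + (k + 1) * Fintype.card σ by ring,
      Nat.add_mul_mod_self_left, Nat.mod_eq_of_lt d.isLt]

theorem residueClassSum_ne_zero [Nontrivial R] [Nonempty σ] (d : Fin k) :
    residueClassSum R σ k d ≠ 0 := by
  obtain ⟨μ, hμ, hμd⟩ := exists_mem_exponentBox_degree_mod_eq (σ := σ) d
  refine ne_zero_iff.2 ⟨μ, ?_⟩
  simp [residueClassSum, coeff_sum, coeff_monomial, hμ, hμd]

theorem linearIndependent_residueClassSum {K : Type*} [Field K] [Nonempty σ] :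
    LinearIndependent K (residueClassSum K σ k) := by
  have hinj : Function.Injective fun d : Fin k => ((d : ℕ) : ZMod k) := fun a b hab => by
    rwa [ZMod.natCast_eq_natCast_iff', Nat.mod_eq_of_lt a.isLt, Nat.mod_eq_of_lt b.isLt,
      ← Fin.ext_iff] at hab
  exact ((weightedDecomposition K (1 : σ → ZMod k)).isInternal.submodule_iSupIndep.comp
    hinj).linearIndependent _ residueClassSum_mem_weightedHomogeneousSubmodule
    residueClassSum_ne_zero

end Residue

theorem prod_X_mul_prod_erase_X_sub_C {K : Type*} [Field K] {k : ℕ} {ξ : K}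
    (hξ : IsPrimitiveRoot ξ k) (i : Fin k) :
    ∏ m : σ, (X m * ∏ j ∈ Finset.univ.erase i, (X m - C (ξ ^ (j : ℕ))))
      = ∑ d : Fin k, ((ξ ^ (i : ℕ))⁻¹) ^ (d : ℕ) • residueClassSum K σ k d := by
  have : NeZero k := ⟨i.pos.ne'⟩
  have hroot : ((ξ ^ (i : ℕ))⁻¹) ^ k = 1 := by
    rw [inv_pow, ← pow_mul, mul_comm, pow_mul, hξ.pow_eq_one, one_pow, inv_one]
  rw [← sum_exponentBox_C_pow_mul_monomial hroot, ← prod_sum_Icc_C_mul_X_pow]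
  refine Finset.prod_congr rfl fun m _ => ?_
  simpa [map_prod, map_sum, algebraMap_eq] using
    congrArg (Polynomial.aeval (X m : MvPolynomial σ K)) (hξ.X_mul_prod_erase_X_sub_C i)

end MvPolynomial

theorem Submodule.span_range_eq_of_isUnit {K V ι : Type*} [Field K] [AddCommGroup V] [Module K V]
    [Fintype ι] [DecidableEq ι] {g h : ι → V} (hh : LinearIndependent K h) {A : Matrix ι ι K}
    (hA : IsUnit A) (hg : ∀ i, g i = ∑ j, A i j • h j) :
    Submodule.span K (Set.range g) = Submodule.span K (Set.range h) := by
  have hle : Submodule.span K (Set.range g) ≤ Submodule.span K (Set.range h) :=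
    Submodule.span_le.2 <| Set.range_subset_iff.2 fun i => hg i ▸
      Submodule.sum_mem _ fun j _ => Submodule.smul_mem _ _ (Submodule.subset_span ⟨j, rfl⟩)
  have hgli : LinearIndependent K g := by
    have : g = Fintype.linearCombination K h ∘ A.row := funext fun i => by
      rw [hg i, Function.comp_apply, Fintype.linearCombination_apply]
      rfl
    rw [this]
    exact (Matrix.linearIndependent_rows_iff_isUnit.2 hA).map' _
      (LinearMap.ker_eq_bot.2 (linearIndependent_iff_injective_fintypeLinearCombination.1 hh))
  have := FiniteDimensional.span_of_finite K (Set.finite_range h)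
  exact Submodule.eq_of_le_of_finrank_eq hle <| by
    rw [finrank_span_eq_card hgli, finrank_span_eq_card hh]

theorem IsPrimitiveRoot.isUnit_vandermonde_inv_pow {K : Type*} [Field K] {k : ℕ} {ξ : K}
    (hξ : IsPrimitiveRoot ξ k) : IsUnit (Matrix.vandermonde fun i : Fin k => (ξ ^ (i : ℕ))⁻¹) :=
  (Matrix.isUnit_iff_isUnit_det _).2 <| isUnit_iff_ne_zero.2 <|
    Matrix.det_vandermonde_ne_zero_iff.2 fun a b hab =>
      Fin.ext (hξ.pow_inj a.isLt b.isLt (inv_injective hab))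

theorem gornik_generators_cyclic_basis_general (n c : ℕ) (hc : 1 ≤ c)
    (ξ : ℂ) (hξ : IsPrimitiveRoot ξ (n - 1))
    (g : Fin (n - 1) → MvPolynomial (Fin c) ℂ)
    (hg : ∀ i : Fin (n - 1), g i
      = ∏ m : Fin c, (X m * ∏ j ∈ Finset.univ.erase i, (X m - MvPolynomial.C (ξ ^ (j : ℕ))))) :
    Module.finrank ℂ (Submodule.span ℂ (Set.range g)) = n - 1 ∧
    ∃ h : Fin (n - 1) → MvPolynomial (Fin c) ℂ,
      LinearIndependent ℂ h ∧
      Submodule.span ℂ (Set.range h) = Submodule.span ℂ (Set.range g) ∧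
      ∀ (d : Fin (n - 1)), ∀ μ ∈ (h d).support,
        (μ.sum fun _ e => e) % (n - 1) = (d : ℕ) := by
  have : Nonempty (Fin c) := ⟨⟨0, hc⟩⟩
  have hli := linearIndependent_residueClassSum (K := ℂ) (σ := Fin c) (k := n - 1)
  have hspan := Submodule.span_range_eq_of_isUnit (g := g) hli hξ.isUnit_vandermonde_inv_pow
    fun i => by simp only [hg i, prod_X_mul_prod_erase_X_sub_C hξ i, Matrix.vandermonde_apply]
  refine ⟨?_, _, hli, hspan.symm, fun d μ hμ => degree_mod_eq_of_mem_support_residueClassSum hμ⟩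
  rw [hspan, finrank_span_eq_card hli, Fintype.card_fin]

/-- Let `n ≥ 2`, `c ≥ 1` and let `ξ` be a primitive `(n−1)`-st root of unity.  The span of
the Gornik cocycles `g_i = ∏_{m=1}^{c} ( x_m · ∏_{j ≠ i} (x_m − ξ^j) )`, `0 ≤ i ≤ n−2`,
in `ℂ[x_1, …, x_c]` has dimension `n − 1`, and it admits a basis `h_0, …, h_{n−2}` such that
for each `d`, every monomial occurring in `h_d` has total degree congruent to `d`
modulo `n − 1`. -/
theorem gornik_generators_cyclic_basis (n c : ℕ) (hn : 2 ≤ n) (hc : 1 ≤ c)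
    (ξ : ℂ) (hξ : IsPrimitiveRoot ξ (n - 1))
    (g : Fin (n - 1) → MvPolynomial (Fin c) ℂ)
    (hg : ∀ i : Fin (n - 1), g i
      = ∏ m : Fin c, (X m * ∏ j ∈ Finset.univ.erase i, (X m - MvPolynomial.C (ξ ^ (j : ℕ))))) :
    Module.finrank ℂ (Submodule.span ℂ (Set.range g)) = n - 1 ∧
    ∃ h : Fin (n - 1) → MvPolynomial (Fin c) ℂ,
      LinearIndependent ℂ h ∧
      Submodule.span ℂ (Set.range h) = Submodule.span ℂ (Set.range g) ∧
      ∀ (d : Fin (n - 1)), ∀ μ ∈ (h d).support,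
        (μ.sum fun _ e => e) % (n - 1) = (d : ℕ) :=
  gornik_generators_cyclic_basis_general n c hc ξ hξ g hg
end
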